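/- Let $\sigma:\mathbb{R}\to(0,\infty)$ be continuous, $\rho\in(-1,1)$, $\bar\rho=\sqrt{1-\rho^2}$, $K$ a square-integrable Volterra kernel on $[0,1]^2$, and for $f$ in the Cameron–Martin space $H_0^1[0,1]$ set $\widehat f(s)=\int_0^s K(s,u)\dot f(u)du$. Define $I_1(x)=\inf_{f\in H_0^1[0,1]}\left[\frac{(x-\rho\int_0^1\sigma(\widehat f(s))\dot f(s)ds)^2}{2\bar\rho^2\int_0^1\sigma(\widehat f(s))^2ds}+\frac12\int_0^1\dot f(s)^2ds\right]$. Then $I_1(0)=0$, $I_1$ is non-decreasing on $[0,\infty)$, and non-increasing on $(-\infty,0]$. -/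

import Mathlib

open MeasureTheory Real

/-!
Fix a control `φ` and write `x = ρ̄ √B y + ρ A`, where `A = ∫₀¹ σ(φ̂) φ`, `B = ∫₀¹ σ(φ̂)²`, so
that the cost of `φ` at `x` is `y² / 2 + ‖φ‖² / 2`. For `x'` between `0` and `x`, the
continuous path `t ↦ ρ̄ √(∫₀ᵗ σ(φ̂)²) y + ρ ∫₀ᵗ σ(φ̂) φ` runs from `0` to `x`, so it hits `x'` at
some time `t`. Since `K` is a Volterra kernel, truncating `φ` at `t` does not change `φ̂` on
`[0, t]`; the truncated control reaches `x'` with a smaller `|y|` and a smaller energy, hence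
costs at most as much. So `I₁(x') ≤ I₁(x)`, and `I₁(0) = 0` is attained by the zero control.
-/

open Set intervalIntegral

namespace RateFunction

/-- The Volterra transform `φ̂(s) = ∫₀ˢ K(s, u) φ(u) du`. -/
noncomputable def volterra (K : ℝ → ℝ → ℝ) (φ : ℝ → ℝ) (s : ℝ) : ℝ := ∫ u in (0:ℝ)..s, K s u * φ u

noncomputable def rateFunctional (σ : ℝ → ℝ) (ρ : ℝ) (K : ℝ → ℝ → ℝ) (x : ℝ) (φ : ℝ → ℝ) : ℝ :=
  (x - ρ * ∫ s in (0:ℝ)..1, σ (volterra K φ s) * φ s) ^ 2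
      / (2 * (1 - ρ ^ 2) * ∫ s in (0:ℝ)..1, σ (volterra K φ s) ^ 2)
    + (1/2) * ∫ s in (0:ℝ)..1, φ s ^ 2

def rateValues (σ : ℝ → ℝ) (ρ : ℝ) (K : ℝ → ℝ → ℝ) (x : ℝ) : Set ℝ :=
  { y | ∃ φ : ℝ → ℝ, MemLp φ 2 (volume.restrict (Ioc (0:ℝ) 1)) ∧ y = rateFunctional σ ρ K x φ }

variable {σ : ℝ → ℝ} {ρ : ℝ} {K : ℝ → ℝ → ℝ}

lemma rateFunctional_nonneg (hρ : ρ ^ 2 ≤ 1) (x : ℝ) (φ : ℝ → ℝ) :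
    0 ≤ rateFunctional σ ρ K x φ := by
  have hσ2 : 0 ≤ ∫ s in (0:ℝ)..1, σ (volterra K φ s) ^ 2 :=
    integral_nonneg zero_le_one fun s _ => sq_nonneg _
  have hφ2 : 0 ≤ ∫ s in (0:ℝ)..1, φ s ^ 2 := integral_nonneg zero_le_one fun s _ => sq_nonneg _
  unfold rateFunctional
  have : 0 ≤ 1 - ρ ^ 2 := by linarith
  positivity

lemma rateFunctional_zero_zero : rateFunctional σ ρ K 0 0 = 0 := by
  simp [rateFunctional]

lemma bddBelow_rateValues (hρ : ρ ^ 2 ≤ 1) (x : ℝ) : BddBelow (rateValues σ ρ K x) :=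
  ⟨0, by rintro y ⟨φ, -, rfl⟩; exact rateFunctional_nonneg hρ x φ⟩

lemma rateValues_nonempty (x : ℝ) : (rateValues σ ρ K x).Nonempty :=
  ⟨_, 0, memLp_const 0, rfl⟩

lemma sInf_rateValues_zero (hρ : ρ ^ 2 ≤ 1) : sInf (rateValues σ ρ K 0) = 0 := by
  have hzero : (0:ℝ) ∈ rateValues σ ρ K 0 := ⟨0, memLp_const 0, rateFunctional_zero_zero.symm⟩
  exact le_antisymm (csInf_le (bddBelow_rateValues hρ 0) hzero)
    (le_csInf ⟨0, hzero⟩ fun _ ⟨φ, _, hy⟩ => hy ▸ rateFunctional_nonneg hρ 0 φ)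

lemma volterra_indicator_Iic {φ : ℝ → ℝ} {s t : ℝ} (hs : 0 ≤ s) (hst : s ≤ t) :
    volterra K ((Iic t).indicator φ) s = volterra K φ s := by
  unfold volterra
  refine integral_congr fun u hu => ?_
  rw [uIcc_of_le hs] at hu
  rw [indicator_of_mem (show u ∈ Iic t from hu.2.trans hst)]

lemma _root_.intervalIntegral.integral_indicator_Iic (f : ℝ → ℝ) {a b t : ℝ} (hat : a ≤ t)
    (htb : t ≤ b) : ∫ s in a..b, (Iic t).indicator f s = ∫ s in a..t, f s := by
  rw [integral_of_le (hat.trans htb), integral_of_le hat, setIntegral_indicator measurableSet_Iic,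
    Ioc_inter_Iic, inf_of_le_right htb]

lemma sq_div_eq_of_eq_sqrt_mul {a P B y d : ℝ} (ha : 0 < a) (hP : 0 ≤ P)
    (h : d = √a * √P * y) : d ^ 2 / (2 * a * B) = P / B * (y ^ 2 / 2) := by
  rw [h, mul_pow, mul_pow, sq_sqrt ha.le, sq_sqrt hP]
  field_simp

lemma exists_hitting_time {G φ : ℝ → ℝ} (hG : Continuous G) (hφ : IntervalIntegrable φ volume 0 1)
    (c y : ℝ) {x' : ℝ}
    (hx' : x' ∈ uIcc 0 (c * √(∫ s in (0:ℝ)..1, G s ^ 2) * y + ρ * ∫ s in (0:ℝ)..1, G s * φ s)) :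
    ∃ t ∈ Icc (0:ℝ) 1,
      x' = c * √(∫ s in (0:ℝ)..t, G s ^ 2) * y + ρ * ∫ s in (0:ℝ)..t, G s * φ s := by
  have hP : Continuous fun t => ∫ s in (0:ℝ)..t, G s ^ 2 :=
    continuous_primitive (fun a b => (hG.pow 2).intervalIntegrable a b) 0
  have hQ : ContinuousOn (fun t => ∫ s in (0:ℝ)..t, G s * φ s) (uIcc 0 1) :=
    continuousOn_primitive_interval' (hφ.continuousOn_mul hG.continuousOn) left_mem_uIcc
  have hpath : ContinuousOn (fun t => c * √(∫ s in (0:ℝ)..t, G s ^ 2) * y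
      + ρ * ∫ s in (0:ℝ)..t, G s * φ s) (uIcc 0 1) :=
    ((continuous_const.mul (continuous_sqrt.comp hP)).mul continuous_const).continuousOn.add
      (continuousOn_const.mul hQ)
  obtain ⟨t, ht, hxt⟩ := intermediate_value_uIcc hpath (by simpa using hx')
  exact ⟨t, by simpa [uIcc_of_le zero_le_one] using ht, hxt.symm⟩

section Truncation

variable {φ : ℝ → ℝ} {t : ℝ}

lemma integral_mul_indicator_Iic (ht0 : 0 ≤ t) (ht1 : t ≤ 1) :
    ∫ s in (0:ℝ)..1, σ (volterra K ((Iic t).indicator φ) s) * (Iic t).indicator φ s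
      = ∫ s in (0:ℝ)..t, σ (volterra K φ s) * φ s := by
  rw [← integral_indicator_Iic _ ht0 ht1]
  refine integral_congr fun s hs => ?_
  rw [uIcc_of_le zero_le_one] at hs
  by_cases hst : s ≤ t
  · simp [indicator_of_mem (show s ∈ Iic t from hst), volterra_indicator_Iic hs.1 hst]
  · simp [indicator_of_notMem (show s ∉ Iic t from hst)]

lemma integral_sq_indicator_Iic_le (hφ : IntervalIntegrable (fun s => φ s ^ 2) volume 0 1)
    (ht0 : 0 ≤ t) (ht1 : t ≤ 1) :
    ∫ s in (0:ℝ)..1, (Iic t).indicator φ s ^ 2 ≤ ∫ s in (0:ℝ)..1, φ s ^ 2 := by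
  have hind : (fun s => (Iic t).indicator φ s ^ 2) = (Iic t).indicator fun s => φ s ^ 2 :=
    ((indicator_comp_of_zero (g := fun r : ℝ => r ^ 2) (by simp)).symm :)
  rw [hind, integral_indicator_Iic _ ht0 ht1]
  exact integral_mono_interval le_rfl ht0 ht1 (ae_of_all _ fun s => sq_nonneg _) hφ

lemma integral_sq_le_integral_sq_indicator_Iic
    (hσφ : Continuous fun s => σ (volterra K ((Iic t).indicator φ) s)) (ht0 : 0 ≤ t)
    (ht1 : t ≤ 1) :
    ∫ s in (0:ℝ)..t, σ (volterra K φ s) ^ 2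
      ≤ ∫ s in (0:ℝ)..1, σ (volterra K ((Iic t).indicator φ) s) ^ 2 := by
  calc ∫ s in (0:ℝ)..t, σ (volterra K φ s) ^ 2
      = ∫ s in (0:ℝ)..t, σ (volterra K ((Iic t).indicator φ) s) ^ 2 :=
        integral_congr fun s hs => by
          rw [uIcc_of_le ht0] at hs
          rw [volterra_indicator_Iic hs.1 hs.2]
    _ ≤ _ := integral_mono_interval le_rfl ht0 ht1 (ae_of_all _ fun s => sq_nonneg _)
        ((hσφ.pow 2).intervalIntegrable 0 1)

end Truncation

variable (hσc : Continuous σ) (hσpos : ∀ x, 0 < σ x) (hρ : ρ ^ 2 < 1)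
  (hK : ∀ φ : ℝ → ℝ, MemLp φ 2 (volume.restrict (Ioc (0:ℝ) 1)) → Continuous (volterra K φ))
include hσc hσpos hρ hK

lemma exists_rateFunctional_le {x x' : ℝ} (hx' : x' ∈ uIcc 0 x) {φ : ℝ → ℝ}
    (hφ : MemLp φ 2 (volume.restrict (Ioc (0:ℝ) 1))) :
    ∃ φ', MemLp φ' 2 (volume.restrict (Ioc (0:ℝ) 1)) ∧
      rateFunctional σ ρ K x' φ' ≤ rateFunctional σ ρ K x φ := by
  have ha : 0 < 1 - ρ ^ 2 := by linarith
  have hG : Continuous fun s => σ (volterra K φ s) := hσc.comp (hK φ hφ)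
  have hφ1 : IntervalIntegrable φ volume 0 1 :=
    (intervalIntegrable_iff_integrableOn_Ioc_of_le zero_le_one).2 (hφ.integrable one_le_two)
  have hφ2 : IntervalIntegrable (fun s => φ s ^ 2) volume 0 1 :=
    (intervalIntegrable_iff_integrableOn_Ioc_of_le zero_le_one).2 hφ.integrable_sq
  set A := ∫ s in (0:ℝ)..1, σ (volterra K φ s) * φ s
  set B := ∫ s in (0:ℝ)..1, σ (volterra K φ s) ^ 2
  have hB : 0 < B := intervalIntegral_pos_of_pos ((hG.pow 2).intervalIntegrable 0 1)
    (fun s => pow_pos (hσpos _) 2) zero_lt_one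
  set y := (x - ρ * A) / (√(1 - ρ ^ 2) * √B)
  have hxy : x - ρ * A = √(1 - ρ ^ 2) * √B * y :=
    (mul_div_cancel₀ _ (by positivity)).symm
  obtain ⟨t, ⟨ht0, ht1⟩, hxt⟩ :=
    exists_hitting_time (ρ := ρ) hG hφ1 (√(1 - ρ ^ 2)) y (x' := x')
      (by rwa [sub_eq_iff_eq_add.1 hxy] at hx')
  set φ' := (Iic t).indicator φ
  have hφ' : MemLp φ' 2 (volume.restrict (Ioc (0:ℝ) 1)) := hφ.indicator measurableSet_Iic
  have hPt : 0 ≤ ∫ s in (0:ℝ)..t, σ (volterra K φ s) ^ 2 :=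
    integral_nonneg ht0 fun s _ => sq_nonneg _
  have hPB' := integral_sq_le_integral_sq_indicator_Iic (hσc.comp (hK φ' hφ')) ht0 ht1
  refine ⟨φ', hφ', ?_⟩
  calc rateFunctional σ ρ K x' φ'
      = (∫ s in (0:ℝ)..t, σ (volterra K φ s) ^ 2)
            / (∫ s in (0:ℝ)..1, σ (volterra K φ' s) ^ 2) * (y ^ 2 / 2)
          + (1/2) * ∫ s in (0:ℝ)..1, φ' s ^ 2 := by
        rw [rateFunctional, integral_mul_indicator_Iic ht0 ht1,
          sq_div_eq_of_eq_sqrt_mul (y := y) ha hPt (by linarith)]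
    _ ≤ 1 * (y ^ 2 / 2) + (1/2) * ∫ s in (0:ℝ)..1, φ s ^ 2 := by
        gcongr
        · exact div_le_one_of_le₀ hPB' (hPt.trans hPB')
        · exact integral_sq_indicator_Iic_le hφ2 ht0 ht1
    _ = rateFunctional σ ρ K x φ := by
        rw [rateFunctional, sq_div_eq_of_eq_sqrt_mul ha hB.le hxy, div_self hB.ne']

lemma sInf_rateValues_le {x x' : ℝ} (hx' : x' ∈ uIcc 0 x) :
    sInf (rateValues σ ρ K x') ≤ sInf (rateValues σ ρ K x) := by
  refine le_csInf (rateValues_nonempty x) ?_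
  rintro _ ⟨φ, hφ, rfl⟩
  obtain ⟨φ', hφ', hle⟩ := exists_rateFunctional_le hσc hσpos hρ hK hx' hφ
  exact (csInf_le (bddBelow_rateValues hρ.le x') ⟨φ', hφ', rfl⟩).trans hle

end RateFunction

theorem rate_function_monotonicity_general
    (σ : ℝ → ℝ) (hσc : Continuous σ) (hσpos : ∀ x, 0 < σ x)
    (ρ : ℝ) (hρ : ρ ∈ Set.Ioo (-1:ℝ) 1)
    (K : ℝ → ℝ → ℝ)
    (hKhat : ∀ φ : ℝ → ℝ, MemLp φ 2 (volume.restrict (Set.Ioc (0:ℝ) 1)) →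
      Continuous fun s => ∫ u in (0:ℝ)..s, K s u * φ u)
    (I1 : ℝ → ℝ)
    (hI1 : ∀ x, I1 x = sInf { y : ℝ | ∃ φ : ℝ → ℝ,
      MemLp φ 2 (volume.restrict (Set.Ioc (0:ℝ) 1)) ∧
      y = (x - ρ * ∫ s in (0:ℝ)..1,
              σ (∫ u in (0:ℝ)..s, K s u * φ u) * φ s) ^ 2
            / (2 * (1 - ρ ^ 2)
              * ∫ s in (0:ℝ)..1, σ (∫ u in (0:ℝ)..s, K s u * φ u) ^ 2)
          + (1/2) * ∫ s in (0:ℝ)..1, φ s ^ 2 }) :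
    I1 0 = 0 ∧ MonotoneOn I1 (Set.Ici 0) ∧ AntitoneOn I1 (Set.Iic 0) := by
  have hρ2 : ρ ^ 2 < 1 := by nlinarith [hρ.1, hρ.2]
  have hI : ∀ x, I1 x = sInf (RateFunction.rateValues σ ρ K x) := hI1
  have hle : ∀ x x', x' ∈ Set.uIcc 0 x → I1 x' ≤ I1 x := fun x x' hx' => by
    simpa only [hI] using RateFunction.sInf_rateValues_le hσc hσpos hρ2 hKhat hx'
  refine ⟨?_, fun a ha b hb hab => hle b a ?_, fun a ha b hb hab => hle a b ?_⟩
  · rw [hI, RateFunction.sInf_rateValues_zero hρ2.le]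
  · rw [Set.uIcc_of_le hb]; exact ⟨ha, hab⟩
  · rw [Set.uIcc_of_ge ha]; exact ⟨hab, hb⟩

theorem rate_function_monotonicity
    (σ : ℝ → ℝ) (hσc : Continuous σ) (hσpos : ∀ x, 0 < σ x)
    (ρ : ℝ) (hρ : ρ ∈ Set.Ioo (-1:ℝ) 1)
    (K : ℝ → ℝ → ℝ)
    (hKsq : MeasureTheory.IntegrableOn (fun p : ℝ × ℝ => K p.1 p.2 ^ 2)
      (Set.Icc 0 1 ×ˢ Set.Icc 0 1))
    (hKhat : ∀ φ : ℝ → ℝ, MemLp φ 2 (volume.restrict (Set.Ioc (0:ℝ) 1)) →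
      Continuous fun s => ∫ u in (0:ℝ)..s, K s u * φ u)
    (I1 : ℝ → ℝ)
    (hI1 : ∀ x, I1 x = sInf { y : ℝ | ∃ φ : ℝ → ℝ,
      MemLp φ 2 (volume.restrict (Set.Ioc (0:ℝ) 1)) ∧
      y = (x - ρ * ∫ s in (0:ℝ)..1,
              σ (∫ u in (0:ℝ)..s, K s u * φ u) * φ s) ^ 2
            / (2 * (1 - ρ ^ 2)
              * ∫ s in (0:ℝ)..1, σ (∫ u in (0:ℝ)..s, K s u * φ u) ^ 2)
          + (1/2) * ∫ s in (0:ℝ)..1, φ s ^ 2 }) :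
    I1 0 = 0 ∧ MonotoneOn I1 (Set.Ici 0) ∧ AntitoneOn I1 (Set.Iic 0) :=
  rate_function_monotonicity_general σ hσc hσpos ρ hρ K hKhat I1 hI1
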